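/- Let (W(t))_{t≥0} be i.i.d. random n×n matrices taking finitely many values, each almost surely symmetric, doubly stochastic, and a projection (W² = W), with λ₂(E[W(0)]) < 1, and define x(t+1) = W(t)x(t) for a deterministic x(0) ∈ ℝⁿ. Then x(t) converges to x_ave·1 in mean square: E[‖x(t) − x_ave·1‖²] → 0 as t → ∞. -/

import Mathlib

open Matrix

/-!
Write `z(t) = x(t) - x_ave • 1`. Row stochasticity gives `z(t+1) = W(t) z(t)` and column
stochasticity keeps `z(t) ⊥ 1`. A symmetric projection satisfies `‖W z‖² = zᵀ W z`, so averaging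
over the last draw gives `E ‖z(t+1)‖² = E [z(t)ᵀ W̄ z(t)]` with `W̄ = E W(0)`. The symmetric matrix
`W̄` has the eigenvector `1` with eigenvalue `1 > λ₂(W̄)`, so every other eigenvalue is at most
`λ₂(W̄)` and `zᵀ W̄ z ≤ λ₂(W̄) ‖z‖²` on `1^⊥`. Hence `E ‖z(t)‖²` decays geometrically.
-/

/-- The second largest eigenvalue (counted with multiplicity) of a symmetric real
matrix: sort the `n` eigenvalues in increasing order and take the `(n-2)`-th
(junk value `0` if the matrix is not Hermitian). -/
noncomputable def lambda2 {n : ℕ} (A : Matrix (Fin n) (Fin n) ℝ) : ℝ :=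
  if h : A.IsHermitian then
    ((Finset.univ.val.map h.eigenvalues).sort (· ≤ ·)).getD (n - 2) 0
  else 0

/-- The gossip trajectory: `traj W x0 0 _ = x0` and
`traj W x0 (t+1) σ = W (σ t) *ᵥ traj W x0 t (σ restricted)`, i.e. the solution of
`x(t+1) = W(t) x(t)` driven by the i.i.d. outcomes `σ`. -/
noncomputable def traj {n : ℕ} {Ω : Type*} (W : Ω → Matrix (Fin n) (Fin n) ℝ)
    (x0 : Fin n → ℝ) : (t : ℕ) → (Fin t → Ω) → (Fin n → ℝ)
  | 0, _ => x0
  | t + 1, σ => W (σ (Fin.last t)) *ᵥ traj W x0 t (fun k => σ k.castSucc)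

theorem List.Pairwise.length_filter_getD_lt_le_one {α : Type*} [LinearOrder α] {l : List α}
    (hl : l.Pairwise (· ≤ ·)) (d : α) :
    (l.filter (fun x => l.getD (l.length - 2) d < x)).length ≤ 1 := by
  rcases Nat.eq_zero_or_pos l.length with h0 | hpos
  · simp [List.length_eq_zero_iff.mp h0]
  set b := l.getD (l.length - 2) d with hb
  have hle : ∀ x ∈ l.take (l.length - 1), x ≤ b := by
    intro x hx
    obtain ⟨i, hi, rfl⟩ := List.mem_take_iff_getElem.mp hx
    rw [hb, List.getD_eq_getElem _ _ (by omega)]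
    exact hl.rel_get_of_le (a := ⟨i, by omega⟩) (b := ⟨l.length - 2, by omega⟩)
      (Fin.mk_le_mk.mpr (by omega))
  rw [← List.take_append_drop (l.length - 1) l, List.filter_append,
    List.filter_eq_nil_iff.mpr fun x hx => by simpa using hle x hx, List.nil_append]
  exact (List.length_filter_le _ _).trans (by simp; omega)

theorem Matrix.IsHermitian.card_lambda2_lt_eigenvalues_le_one {n : ℕ}
    {A : Matrix (Fin n) (Fin n) ℝ} (hA : A.IsHermitian) :
    (Finset.univ.filter fun i => lambda2 A < hA.eigenvalues i).card ≤ 1 := by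
  set l := (Finset.univ.val.map hA.eigenvalues).sort (· ≤ ·)
  have hlen : l.length = n := by simp [l]
  have hlambda2 : lambda2 A = l.getD (l.length - 2) 0 := by rw [lambda2, dif_pos hA, hlen]
  have hl : (l : Multiset ℝ) = Finset.univ.val.map hA.eigenvalues := Multiset.sort_eq _ _
  calc (Finset.univ.filter fun i => lambda2 A < hA.eigenvalues i).card
      = ((l : Multiset ℝ).filter (lambda2 A < ·)).card := by
        rw [hl, Multiset.filter_map, Multiset.card_map]; rfl
    _ ≤ 1 := by
        rw [Multiset.filter_coe, Multiset.coe_card, hlambda2]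
        exact (Multiset.pairwise_sort _ _).length_filter_getD_lt_le_one 0

theorem Matrix.IsHermitian.eigenvalues_le_lambda2_of_ne {n : ℕ}
    {A : Matrix (Fin n) (Fin n) ℝ} (hA : A.IsHermitian) {i j : Fin n}
    (hi : lambda2 A < hA.eigenvalues i) (hji : j ≠ i) : hA.eigenvalues j ≤ lambda2 A := by
  by_contra! hj
  exact hji (Finset.card_le_one.mp hA.card_lambda2_lt_eigenvalues_le_one j (by simpa using hj) i
    (by simpa using hi))

theorem OrthonormalBasis.dotProduct_eq_sum {ι m : Type*} [Fintype ι] [Fintype m]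
    (b : OrthonormalBasis ι ℝ (EuclideanSpace ℝ m)) (x y : m → ℝ) :
    x ⬝ᵥ y = ∑ i, (b i ⬝ᵥ x) * (b i ⬝ᵥ y) := by
  have := b.sum_inner_mul_inner (WithLp.toLp 2 y) (WithLp.toLp 2 x)
  simp only [EuclideanSpace.inner_eq_star_dotProduct, star_trivial] at this
  simpa only [dotProduct_comm _ (b _ : m → ℝ), mul_comm] using this.symm

theorem Matrix.IsHermitian.eigenvectorBasis_dotProduct_mulVec {m : Type*} [Fintype m]
    [DecidableEq m] {A : Matrix m m ℝ} (hA : A.IsHermitian) (i : m) (x : m → ℝ) :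
    hA.eigenvectorBasis i ⬝ᵥ (A *ᵥ x) = hA.eigenvalues i * (hA.eigenvectorBasis i ⬝ᵥ x) := by
  rw [dotProduct_mulVec, ← mulVec_transpose, ← conjTranspose_eq_transpose_of_trivial, hA.eq,
    mulVec_eigenvectorBasis, smul_dotProduct, smul_eq_mul]

theorem Matrix.IsHermitian.dotProduct_mulVec_le_lambda2_mul {n : ℕ}
    {A : Matrix (Fin n) (Fin n) ℝ} (hA : A.IsHermitian) {v : Fin n → ℝ} {μ : ℝ}
    (hv : A *ᵥ v = μ • v) (hv0 : v ≠ 0) (hμ : lambda2 A < μ) {y : Fin n → ℝ}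
    (hy : y ⬝ᵥ v = 0) : y ⬝ᵥ (A *ᵥ y) ≤ lambda2 A * (y ⬝ᵥ y) := by
  set b := hA.eigenvectorBasis
  set c : Fin n → ℝ := fun i => b i ⬝ᵥ y
  set d : Fin n → ℝ := fun i => b i ⬝ᵥ v
  have hd : ∀ i, (hA.eigenvalues i - μ) * d i = 0 := fun i => by
    have := hA.eigenvectorBasis_dotProduct_mulVec i v
    rw [hv, dotProduct_smul, smul_eq_mul] at this
    simp only [d, b]
    linarith
  -- an eigenvalue above `lambda2 A` is unique, so it must be `μ` and carry all of `v`
  have hc : ∀ i, lambda2 A < hA.eigenvalues i → c i = 0 := by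
    intro i hi
    have hdj : ∀ j ≠ i, d j = 0 := fun j hj => (mul_eq_zero.mp (hd j)).resolve_left
      (sub_ne_zero.mpr (hA.eigenvalues_le_lambda2_of_ne hi hj |>.trans_lt hμ).ne)
    have hsum : ∀ x : Fin n → ℝ, ∑ j, (b j ⬝ᵥ x) * d j = (b i ⬝ᵥ x) * d i := fun x =>
      Finset.sum_eq_single i (fun j _ hj => by rw [hdj j hj, mul_zero]) (by simp)
    have hdi : d i ≠ 0 := by
      intro hdi
      apply hv0
      rw [← dotProduct_self_eq_zero, b.dotProduct_eq_sum, hsum, hdi, mul_zero]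
    rw [b.dotProduct_eq_sum, hsum] at hy
    exact (mul_eq_zero.mp hy).resolve_right hdi
  calc y ⬝ᵥ (A *ᵥ y) = ∑ i, hA.eigenvalues i * c i ^ 2 := by
        rw [b.dotProduct_eq_sum]
        refine Finset.sum_congr rfl fun i _ => ?_
        rw [hA.eigenvectorBasis_dotProduct_mulVec]
        ring
    _ ≤ ∑ i, lambda2 A * c i ^ 2 := by
        refine Finset.sum_le_sum fun i _ => ?_
        rcases le_or_gt (hA.eigenvalues i) (lambda2 A) with h | h
        · exact mul_le_mul_of_nonneg_right h (sq_nonneg _)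
        · simp [hc i h]
    _ = lambda2 A * (y ⬝ᵥ y) := by
        rw [b.dotProduct_eq_sum y y, Finset.mul_sum]
        simp only [c, sq]

theorem Matrix.IsHermitian.dotProduct_mulVec_le_lambda2_mul_of_mulVec_one {n : ℕ}
    {A : Matrix (Fin n) (Fin n) ℝ} (hA : A.IsHermitian) (hA1 : A *ᵥ 1 = 1) (hlam : lambda2 A < 1)
    {y : Fin n → ℝ} (hy : y ⬝ᵥ 1 = 0) : y ⬝ᵥ (A *ᵥ y) ≤ lambda2 A * (y ⬝ᵥ y) := by
  cases n with
  | zero => simp [dotProduct]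
  | succ n =>
    exact hA.dotProduct_mulVec_le_lambda2_mul (by rw [hA1, one_smul]) one_ne_zero hlam hy

theorem Matrix.IsSymm.mulVec_dotProduct_mulVec_self {m R : Type*} [Fintype m] [CommSemiring R]
    {P : Matrix m m R} (hP : P.IsSymm) (hPP : P * P = P) (v : m → R) :
    (P *ᵥ v) ⬝ᵥ (P *ᵥ v) = v ⬝ᵥ (P *ᵥ v) := by
  rw [dotProduct_mulVec, ← mulVec_transpose, hP.eq, mulVec_mulVec, hPP, dotProduct_comm]

theorem tendsto_zero_of_le_mul_of_lt_one {u : ℕ → ℝ} {c : ℝ} (hu0 : ∀ t, 0 ≤ u t) (hc : c < 1)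
    (hu : ∀ t, u (t + 1) ≤ c * u t) : Filter.Tendsto u Filter.atTop (nhds 0) := by
  have hc' : max c 0 < 1 := max_lt hc one_pos
  refine squeeze_zero hu0 (fun t => le_geom (le_max_right c 0) t fun k _ => ?_)
    (by simpa using (tendsto_pow_atTop_nhds_zero_of_lt_one (le_max_right c 0) hc').mul_const (u 0))
  exact (hu k).trans (mul_le_mul_of_nonneg_right (le_max_left c 0) (hu0 k))

section Trajectory

variable {n : ℕ} {Ω : Type*}

theorem traj_snoc (W : Ω → Matrix (Fin n) (Fin n) ℝ) (x0 : Fin n → ℝ) (t : ℕ) (σ : Fin t → Ω)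
    (ω : Ω) : traj W x0 (t + 1) (Fin.snoc σ ω) = W ω *ᵥ traj W x0 t σ := by
  simp [traj]

theorem traj_dotProduct_one {W : Ω → Matrix (Fin n) (Fin n) ℝ} (x0 : Fin n → ℝ) {t : ℕ}
    {σ : Fin t → Ω} (hcol : ∀ k, 1 ᵥ* W (σ k) = 1) : traj W x0 t σ ⬝ᵥ 1 = x0 ⬝ᵥ 1 := by
  induction t with
  | zero => rfl
  | succ t ih =>
    rw [traj, dotProduct_comm, dotProduct_mulVec, hcol, dotProduct_comm, ih fun k => hcol _]

end Trajectory

section Expectation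

variable {Ω : Type*} [Fintype Ω]

theorem Finset.sum_smul_congr_of_pos {M : Type*} [AddCommMonoid M] [Module ℝ M] {p : Ω → ℝ}
    (hp : ∀ ω, 0 ≤ p ω) {f g : Ω → M} (h : ∀ ω, 0 < p ω → f ω = g ω) :
    ∑ ω, p ω • f ω = ∑ ω, p ω • g ω :=
  Finset.sum_congr rfl fun ω _ => by
    rcases (hp ω).eq_or_lt with h0 | hpos
    · simp [← h0]
    · rw [h ω hpos]

def iidExpect (p : Ω → ℝ) (t : ℕ) (f : (Fin t → Ω) → ℝ) : ℝ :=
  ∑ σ : Fin t → Ω, (∏ k, p (σ k)) * f σ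

theorem iidExpect_succ (p : Ω → ℝ) (t : ℕ) (f : (Fin (t + 1) → Ω) → ℝ) :
    iidExpect p (t + 1) f = iidExpect p t fun σ => ∑ ω, p ω * f (Fin.snoc σ ω) := by
  rw [iidExpect, ← (Fin.snocEquiv fun _ => Ω).sum_comp, Fintype.sum_prod_type_right]
  simp only [iidExpect, Finset.mul_sum]
  refine Finset.sum_congr rfl fun σ _ => Finset.sum_congr rfl fun ω _ => ?_
  simp only [Fin.snocEquiv, Equiv.coe_fn_mk, Fin.prod_univ_castSucc, Fin.snoc_castSucc,
    Fin.snoc_last]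
  ring

theorem iidExpect_nonneg {p : Ω → ℝ} (hp : ∀ ω, 0 ≤ p ω) {t : ℕ} {f : (Fin t → Ω) → ℝ}
    (hf : ∀ σ, 0 ≤ f σ) : 0 ≤ iidExpect p t f :=
  Finset.sum_nonneg fun σ _ => mul_nonneg (Finset.prod_nonneg fun _ _ => hp _) (hf σ)

theorem iidExpect_mono {p : Ω → ℝ} (hp : ∀ ω, 0 ≤ p ω) {t : ℕ} {f g : (Fin t → Ω) → ℝ}
    (hfg : ∀ σ, (∀ k, 0 < p (σ k)) → f σ ≤ g σ) : iidExpect p t f ≤ iidExpect p t g := by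
  refine Finset.sum_le_sum fun σ _ => ?_
  by_cases hσ : ∀ k, 0 < p (σ k)
  · exact mul_le_mul_of_nonneg_left (hfg σ hσ) (Finset.prod_nonneg fun _ _ => hp _)
  · obtain ⟨k, hk⟩ := not_forall.mp hσ
    have h0 : ∏ j, p (σ j) = 0 :=
      Finset.prod_eq_zero (Finset.mem_univ k) (le_antisymm (not_lt.mp hk) (hp _))
    simp [h0]

theorem iidExpect_const_mul (p : Ω → ℝ) (t : ℕ) (c : ℝ) (f : (Fin t → Ω) → ℝ) :
    iidExpect p t (fun σ => c * f σ) = c * iidExpect p t f := by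
  simp only [iidExpect, Finset.mul_sum]
  exact Finset.sum_congr rfl fun σ _ => by ring

end Expectation

section Gossip

variable {n : ℕ} {Ω : Type*} [Fintype Ω]

noncomputable def meanSqDev (p : Ω → ℝ) (W : Ω → Matrix (Fin n) (Fin n) ℝ) (x0 : Fin n → ℝ)
    (a : ℝ) (t : ℕ) : ℝ :=
  iidExpect p t fun σ => (traj W x0 t σ - a • 1) ⬝ᵥ (traj W x0 t σ - a • 1)

variable {p : Ω → ℝ} {W : Ω → Matrix (Fin n) (Fin n) ℝ}

theorem isHermitian_sum_smul_of_pos (hp : ∀ ω, 0 ≤ p ω) (hsymm : ∀ ω, 0 < p ω → (W ω).IsSymm) :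
    (∑ ω, p ω • W ω).IsHermitian := by
  rw [isHermitian_iff_isSymm, IsSymm, transpose_sum]
  simp only [transpose_smul]
  exact Finset.sum_smul_congr_of_pos hp fun ω h => (hsymm ω h).eq

theorem sum_smul_mulVec_one (hp : ∀ ω, 0 ≤ p ω) (hsum : ∑ ω, p ω = 1)
    (hrow : ∀ ω, 0 < p ω → W ω *ᵥ 1 = 1) : (∑ ω, p ω • W ω) *ᵥ 1 = 1 := by
  simp only [sum_mulVec, smul_mulVec]
  rw [Finset.sum_smul_congr_of_pos hp hrow, ← Finset.sum_smul, hsum, one_smul]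

theorem sum_mul_mulVec_dotProduct_mulVec_self (hp : ∀ ω, 0 ≤ p ω)
    (hsymm : ∀ ω, 0 < p ω → (W ω).IsSymm) (hproj : ∀ ω, 0 < p ω → W ω * W ω = W ω)
    (y : Fin n → ℝ) :
    ∑ ω, p ω * ((W ω *ᵥ y) ⬝ᵥ (W ω *ᵥ y)) = y ⬝ᵥ ((∑ ω, p ω • W ω) *ᵥ y) := by
  simp only [sum_mulVec, dotProduct_sum, smul_mulVec, dotProduct_smul, ← smul_eq_mul]
  exact Finset.sum_smul_congr_of_pos hp fun ω h =>
    (hsymm ω h).mulVec_dotProduct_mulVec_self (hproj ω h) y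

theorem meanSqDev_succ_le (hp : ∀ ω, 0 ≤ p ω) (hsum : ∑ ω, p ω = 1)
    (hsymm : ∀ ω, 0 < p ω → (W ω).IsSymm) (hrow : ∀ ω, 0 < p ω → W ω *ᵥ 1 = 1)
    (hcol : ∀ ω, 0 < p ω → 1 ᵥ* W ω = 1) (hproj : ∀ ω, 0 < p ω → W ω * W ω = W ω)
    (hlam : lambda2 (∑ ω, p ω • W ω) < 1) {x0 : Fin n → ℝ} {a : ℝ}
    (hx0 : (x0 - a • 1) ⬝ᵥ 1 = 0) (t : ℕ) :
    meanSqDev p W x0 a (t + 1) ≤ lambda2 (∑ ω, p ω • W ω) * meanSqDev p W x0 a t := by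
  rw [meanSqDev, iidExpect_succ, meanSqDev, ← iidExpect_const_mul]
  refine iidExpect_mono hp fun σ hσ => ?_
  set y := traj W x0 t σ - a • 1
  have hy : y ⬝ᵥ 1 = 0 := by
    rw [sub_dotProduct, traj_dotProduct_one x0 fun k => hcol _ (hσ k), ← sub_dotProduct, hx0]
  calc ∑ ω, p ω * ((traj W x0 (t + 1) (Fin.snoc σ ω) - a • 1) ⬝ᵥ
          (traj W x0 (t + 1) (Fin.snoc σ ω) - a • 1))
      = ∑ ω, p ω * ((W ω *ᵥ y) ⬝ᵥ (W ω *ᵥ y)) := by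
        simp only [← smul_eq_mul]
        refine Finset.sum_smul_congr_of_pos hp fun ω h => ?_
        rw [traj_snoc, mulVec_sub, mulVec_smul, hrow ω h]
    _ = y ⬝ᵥ ((∑ ω, p ω • W ω) *ᵥ y) := sum_mul_mulVec_dotProduct_mulVec_self hp hsymm hproj y
    _ ≤ lambda2 (∑ ω, p ω • W ω) * (y ⬝ᵥ y) :=
        (isHermitian_sum_smul_of_pos hp hsymm).dotProduct_mulVec_le_lambda2_mul_of_mulVec_one
          (sum_smul_mulVec_one hp hsum hrow) hlam hy

end Gossip

theorem gossip_converges_in_mean_square_general {n : ℕ} {Ω : Type*} [Fintype Ω]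
    (p : Ω → ℝ) (hp : ∀ ω, 0 ≤ p ω) (hsum : ∑ ω, p ω = 1)
    (W : Ω → Matrix (Fin n) (Fin n) ℝ)
    (hsymm : ∀ ω, 0 < p ω → (W ω).IsSymm)
    (hrow : ∀ ω, 0 < p ω → ∀ i, ∑ j, W ω i j = 1)
    (hcol : ∀ ω, 0 < p ω → ∀ j, ∑ i, W ω i j = 1)
    (hproj : ∀ ω, 0 < p ω → W ω * W ω = W ω)
    (hlam : lambda2 (∑ ω, p ω • W ω) < 1)
    (x0 : Fin n → ℝ) :
    Filter.Tendsto
      (fun t : ℕ => ∑ σ : Fin t → Ω, (∏ k, p (σ k)) *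
        ((traj W x0 t σ - ((∑ i, x0 i) / n) • fun _ => (1 : ℝ)) ⬝ᵥ
          (traj W x0 t σ - ((∑ i, x0 i) / n) • fun _ => (1 : ℝ))))
      Filter.atTop (nhds 0) := by
  have hmulVec_one : ∀ ω, 0 < p ω → W ω *ᵥ 1 = 1 := fun ω h => by
    ext i; simpa [mulVec, dotProduct] using hrow ω h i
  have hone_vecMul : ∀ ω, 0 < p ω → 1 ᵥ* W ω = 1 := fun ω h => by
    ext j; simpa [vecMul, dotProduct] using hcol ω h j
  have hx0 : (x0 - ((∑ i, x0 i) / n) • 1) ⬝ᵥ 1 = 0 := by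
    rcases Nat.eq_zero_or_pos n with rfl | hn
    · simp [dotProduct]
    · simp [dotProduct, mul_div_cancel₀ _ (Nat.cast_ne_zero.mpr hn.ne' : (n : ℝ) ≠ 0)]
  show Filter.Tendsto (meanSqDev p W x0 ((∑ i, x0 i) / n)) _ _
  exact tendsto_zero_of_le_mul_of_lt_one
    (fun t => iidExpect_nonneg hp fun σ => dotProduct_self_star_nonneg _) hlam
    (meanSqDev_succ_le hp hsum hsymm hmulVec_one hone_vecMul hproj hlam hx0)

/-- Let `(W(t))` be i.i.d. random `n × n` matrices taking finitely many values
(common law `p` on a finite set of outcomes `Ω`), each almost surely symmetric,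
doubly stochastic, and a projection, with `λ₂(E[W(0)]) < 1`, and let
`x(t+1) = W(t) x(t)` from a deterministic `x(0)`.  Then `x(t)` converges to
`x_ave·1` in mean square: `E[‖x(t) − x_ave·1‖²] → 0` as `t → ∞`
(Euclidean norms written via the dot product). -/
theorem gossip_converges_in_mean_square {n : ℕ} {Ω : Type*} [Fintype Ω]
    (p : Ω → ℝ) (hp : ∀ ω, 0 ≤ p ω) (hsum : ∑ ω, p ω = 1)
    (W : Ω → Matrix (Fin n) (Fin n) ℝ)
    (hsymm : ∀ ω, 0 < p ω → (W ω).IsSymm)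
    (hnonneg : ∀ ω, 0 < p ω → ∀ i j, 0 ≤ W ω i j)
    (hrow : ∀ ω, 0 < p ω → ∀ i, ∑ j, W ω i j = 1)
    (hcol : ∀ ω, 0 < p ω → ∀ j, ∑ i, W ω i j = 1)
    (hproj : ∀ ω, 0 < p ω → W ω * W ω = W ω)
    (hlam : lambda2 (∑ ω, p ω • W ω) < 1)
    (x0 : Fin n → ℝ) :
    Filter.Tendsto
      (fun t : ℕ => ∑ σ : Fin t → Ω, (∏ k, p (σ k)) *
        ((traj W x0 t σ - ((∑ i, x0 i) / n) • fun _ => (1 : ℝ)) ⬝ᵥ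
          (traj W x0 t σ - ((∑ i, x0 i) / n) • fun _ => (1 : ℝ))))
      Filter.atTop (nhds 0) :=
  gossip_converges_in_mean_square_general p hp hsum W hsymm hrow hcol hproj hlam x0
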